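/- Extension of truth (case n = k = 1): if X is an effective set and F ∈ |El(X)| → P(ℕ) is a stable predicate on El(X) such that ⊨ ∀x ∈ |X|, |x =_X x| ⇒ F(el_X(x)), then ⊨ ∀u ∈ |El(X)|, |u =_{El(X)} u| ⇒ F(u). -/

import Mathlib

open Nat.Partrec (Code)

/-- `φ_e(n)` : evaluation of the `e`-th partial recursive function. -/
def Phi (e n : ℕ) : Part ℕ := (Denumerable.ofNat Code e).eval n

/-- Realisability implication. -/
def rImp (F G : Set ℕ) : Set ℕ := {e | ∀ n ∈ F, ∃ m ∈ G, m ∈ Phi e n}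

/-- Realisability conjunction via pairing. -/
def rAnd (F G : Set ℕ) : Set ℕ := {k | ∃ n ∈ F, ∃ m ∈ G, k = Nat.pair n m}

/-- Realisability bi-implication. -/
def rIff (F G : Set ℕ) : Set ℕ := rAnd (rImp F G) (rImp G F)

/-- Realisability universal quantification (intersection). -/
def rAll {X : Type} (H : X → Set ℕ) : Set ℕ := ⋂ x, H x

/-- Realisability existential quantification (union). -/
def rEx {X : Type} (H : X → Set ℕ) : Set ℕ := ⋃ x, H x

/-- Realisability symmetry of a relation. -/
def IsSymm' {X : Type} (eqX : X → X → Set ℕ) : Prop :=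
  (rAll fun x => rAll fun y => rImp (eqX x y) (eqX y x)).Nonempty

/-- Realisability transitivity of a relation. -/
def IsTrans' {X : Type} (eqX : X → X → Set ℕ) : Prop :=
  (rAll fun x => rAll fun y => rAll fun z =>
    rImp (eqX x y) (rImp (eqX y z) (eqX x z))).Nonempty

/-- `eqX` makes its carrier an effective set. -/
def IsEff {X : Type} (eqX : X → X → Set ℕ) : Prop := IsSymm' eqX ∧ IsTrans' eqX

/-- Equality of `El(X)` : stability ∧ unicity ∧ existence ∧ equivalence. -/
def elEq {X : Type} (eqX : X → X → Set ℕ) (u v : X → Set ℕ) : Set ℕ :=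
  rAnd (rAll fun x => rAll fun x' => rImp (u x) (rImp (eqX x x') (u x')))
    (rAnd (rAll fun x => rAll fun x' => rImp (u x) (rImp (u x') (eqX x x')))
      (rAnd (rEx fun x => u x)
        (rAll fun x => rIff (u x) (v x))))

/-- Injection from the low level to the high level. -/
def el {X : Type} (eqX : X → X → Set ℕ) (x : X) : X → Set ℕ := fun y => eqX x y

/-! ### Auxiliary lemmas -/

theorem Phi_partrec : Partrec₂ Phi :=
  Nat.Partrec.Code.eval_part.comp ((Computable.ofNat _).comp Computable.fst) Computable.snd

theorem Phi_encode (c : Nat.Partrec.Code) (n : ℕ) :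
    Phi (Encodable.encode c) n = c.eval n := by
  simp [Phi, Denumerable.ofNat_encode]

theorem mem_rAll {X : Type} {H : X → Set ℕ} {e : ℕ} : e ∈ rAll H ↔ ∀ x, e ∈ H x :=
  Set.mem_iInter

theorem mem_rImp {F G : Set ℕ} {e : ℕ} :
    e ∈ rImp F G ↔ ∀ n ∈ F, ∃ m ∈ G, m ∈ Phi e n := Iff.rfl

theorem extension_of_truth {X : Type} (eqX : X → X → Set ℕ) (h : IsEff eqX)
    (F : (X → Set ℕ) → Set ℕ)
    (hstable : (rAll fun u : X → Set ℕ => rAll fun u' : X → Set ℕ =>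
      rImp (elEq eqX u u') (rImp (F u) (F u'))).Nonempty)
    (hbase : (rAll fun x : X => rImp (eqX x x) (F (el eqX x))).Nonempty) :
    (rAll fun u : X → Set ℕ => rImp (elEq eqX u u) (F u)).Nonempty := by
  classical
  obtain ⟨sy, hsy⟩ := h.1
  obtain ⟨t0, ht0⟩ := h.2
  obtain ⟨s0, hs0⟩ := hstable
  obtain ⟨b0, hb0⟩ := hbase
  -- convenient instantiations
  have hsy' : ∀ a b : X, sy ∈ rImp (eqX a b) (eqX b a) := fun a b =>
    mem_rAll.1 (mem_rAll.1 hsy a) b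
  have ht0' : ∀ a b c : X, t0 ∈ rImp (eqX a b) (rImp (eqX b c) (eqX a c)) := fun a b c =>
    mem_rAll.1 (mem_rAll.1 (mem_rAll.1 ht0 a) b) c
  have hs0' : ∀ u u' : X → Set ℕ, s0 ∈ rImp (elEq eqX u u') (rImp (F u) (F u')) :=
    fun u u' => mem_rAll.1 (mem_rAll.1 hs0 u) u'
  have hb0' : ∀ x : X, b0 ∈ rImp (eqX x x) (F (el eqX x)) := fun x => mem_rAll.1 hb0 x
  have hPhi : Partrec₂ Phi := Phi_partrec
  have pu1 : Primrec fun n : ℕ => n.unpair.1 := Primrec.fst.comp Primrec.unpair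
  have pu2 : Primrec fun n : ℕ => n.unpair.2 := Primrec.snd.comp Primrec.unpair
  -- code for the "unicity of el x" realizer
  have hk : Partrec fun a : ℕ => (Phi sy a).bind fun v => Phi t0 v :=
    (hPhi.comp (Computable.const sy) Computable.id).bind
      (hPhi.comp (Computable.const t0) Computable.snd)
  obtain ⟨ck, hck⟩ := Nat.Partrec.Code.exists_code.1 (Partrec.nat_iff.1 hk)
  -- code for the first implication of the equivalence
  have hf1 : Partrec fun p : ℕ =>
      (Phi p.unpair.1.unpair.1 p.unpair.1.unpair.2.unpair.2.unpair.1).bind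
        fun c => Phi c p.unpair.2 :=
    (hPhi.comp (pu1.comp pu1).to_comp (pu1.comp (pu2.comp (pu2.comp pu1))).to_comp).bind
      (hPhi.comp Computable.snd ((pu2.to_comp).comp Computable.fst))
  obtain ⟨c1, hc1⟩ := Nat.Partrec.Code.exists_code.1 (Partrec.nat_iff.1 hf1)
  -- code for the second implication of the equivalence
  have hf2 : Partrec fun p : ℕ =>
      (Phi p.unpair.1.unpair.2.unpair.1 p.unpair.1.unpair.2.unpair.2.unpair.1).bind
        fun c => Phi c p.unpair.2 :=
    (hPhi.comp (pu1.comp (pu2.comp pu1)).to_comp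
        (pu1.comp (pu2.comp (pu2.comp pu1))).to_comp).bind
      (hPhi.comp Computable.snd ((pu2.to_comp).comp Computable.fst))
  obtain ⟨c2, hc2⟩ := Nat.Partrec.Code.exists_code.1 (Partrec.nat_iff.1 hf2)
  -- the combined realizer E n r of elEq eqX (el eqX x) u
  have hcurry1 : Primrec fun n : ℕ => Encodable.encode (Nat.Partrec.Code.curry c1 n) :=
    Primrec.encode.comp (Nat.Partrec.Code.primrec₂_curry.comp (Primrec.const c1) Primrec.id)
  have hcurry2 : Primrec fun n : ℕ => Encodable.encode (Nat.Partrec.Code.curry c2 n) :=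
    Primrec.encode.comp (Nat.Partrec.Code.primrec₂_curry.comp (Primrec.const c2) Primrec.id)
  have hE : Primrec₂ fun n r : ℕ =>
      Nat.pair t0 (Nat.pair (Encodable.encode ck) (Nat.pair r
        (Nat.pair (Encodable.encode (Nat.Partrec.Code.curry c1 n))
          (Encodable.encode (Nat.Partrec.Code.curry c2 n))))) :=
    Primrec₂.natPair.comp (Primrec.const t0) <|
      Primrec₂.natPair.comp (Primrec.const (Encodable.encode ck)) <|
        Primrec₂.natPair.comp Primrec.snd <|
          Primrec₂.natPair.comp (hcurry1.comp Primrec.fst) (hcurry2.comp Primrec.fst)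
  -- main partial recursive function
  have hf : Partrec fun n : ℕ =>
      ((Phi n.unpair.2.unpair.1 n.unpair.2.unpair.2.unpair.1).bind fun c =>
        Phi c n.unpair.2.unpair.2.unpair.1).bind fun r =>
      (Phi s0 (Nat.pair t0 (Nat.pair (Encodable.encode ck) (Nat.pair r
        (Nat.pair (Encodable.encode (Nat.Partrec.Code.curry c1 n))
          (Encodable.encode (Nat.Partrec.Code.curry c2 n))))))).bind fun c =>
      (Phi b0 r).bind fun m2 => Phi c m2 := by
    refine Partrec.bind ?_ ?_
    · exact (hPhi.comp (pu1.comp pu2).to_comp (pu1.comp (pu2.comp pu2)).to_comp).bind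
        (hPhi.comp Computable.snd
          (((pu1.comp (pu2.comp pu2)).to_comp).comp Computable.fst))
    · refine Partrec.bind (hPhi.comp (Computable.const s0) hE.to_comp) ?_
      refine Partrec.bind
        (hPhi.comp (Computable.const b0) (Computable.snd.comp Computable.fst)) ?_
      exact hPhi.comp (Computable.snd.comp Computable.fst) Computable.snd
  obtain ⟨cf, hcf⟩ := Nat.Partrec.Code.exists_code.1 (Partrec.nat_iff.1 hf)
  refine ⟨Encodable.encode cf, mem_rAll.2 fun u => mem_rImp.2 fun n hn => ?_⟩
  -- unpack the hypothesis n ∈ elEq eqX u u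
  obtain ⟨sA, hsA, r1, hr1, rfl⟩ := hn
  obtain ⟨unB, hunB, r2, hr2, rfl⟩ := hr1
  obtain ⟨exC, hexC, dD, hdD, rfl⟩ := hr2
  obtain ⟨x, hx⟩ := Set.mem_iUnion.1 hexC
  have hA' : ∀ a b : X, sA ∈ rImp (u a) (rImp (eqX a b) (u b)) := fun a b =>
    mem_rAll.1 (mem_rAll.1 hsA a) b
  have hB' : ∀ a b : X, unB ∈ rImp (u a) (rImp (u b) (eqX a b)) := fun a b =>
    mem_rAll.1 (mem_rAll.1 hunB a) b
  -- get a realizer of eqX x x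
  obtain ⟨c', hc'mem, hc'ev⟩ := hB' x x exC hx
  obtain ⟨r, hr, hrev⟩ := hc'mem exC hx
  set n0 : ℕ := Nat.pair sA (Nat.pair unB (Nat.pair exC dD)) with hn0
  set Ev : ℕ := Nat.pair t0 (Nat.pair (Encodable.encode ck) (Nat.pair r
    (Nat.pair (Encodable.encode (Nat.Partrec.Code.curry c1 n0))
      (Encodable.encode (Nat.Partrec.Code.curry c2 n0))))) with hEv
  -- Ev realizes elEq eqX (el eqX x) u
  have hEmem : Ev ∈ elEq eqX (el eqX x) u := by
    refine ⟨t0, ?_, _, ⟨Encodable.encode ck, ?_, _, ⟨r, ?_,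
      Nat.pair (Encodable.encode (Nat.Partrec.Code.curry c1 n0))
        (Encodable.encode (Nat.Partrec.Code.curry c2 n0)), ?_, rfl⟩, rfl⟩, rfl⟩
    · -- stability of el eqX x : transitivity
      exact mem_rAll.2 fun a => mem_rAll.2 fun b => ht0' x a b
    · -- unicity of el eqX x
      refine mem_rAll.2 fun a => mem_rAll.2 fun b => mem_rImp.2 fun p hp => ?_
      obtain ⟨v, hv, hvev⟩ := hsy' x a p hp
      obtain ⟨m, hm, hmev⟩ := ht0' a x b v hv
      refine ⟨m, hm, ?_⟩
      rw [Phi_encode, hck]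
      exact Part.mem_bind_iff.2 ⟨v, hvev, hmev⟩
    · -- existence
      exact Set.mem_iUnion.2 ⟨x, hr⟩
    · -- equivalence
      refine mem_rAll.2 fun y => ⟨_, ?_, _, ?_, rfl⟩
      · -- eqX x y → u y
        refine mem_rImp.2 fun a ha => ?_
        obtain ⟨c, hcm, hcev⟩ := hA' x y exC hx
        obtain ⟨m, hm, hmev⟩ := hcm a ha
        refine ⟨m, hm, ?_⟩
        rw [Phi_encode, Nat.Partrec.Code.eval_curry, hc1]
        simp only [hn0, Nat.unpair_pair]
        exact Part.mem_bind_iff.2 ⟨c, hcev, hmev⟩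
      · -- u y → eqX x y
        refine mem_rImp.2 fun p hp => ?_
        obtain ⟨c, hcm, hcev⟩ := hB' x y exC hx
        obtain ⟨m, hm, hmev⟩ := hcm p hp
        refine ⟨m, hm, ?_⟩
        rw [Phi_encode, Nat.Partrec.Code.eval_curry, hc2]
        simp only [hn0, Nat.unpair_pair]
        exact Part.mem_bind_iff.2 ⟨c, hcev, hmev⟩
  -- now apply stability of F and the base case
  obtain ⟨cF, hcFm, hcFev⟩ := hs0' (el eqX x) u Ev hEmem
  obtain ⟨m2, hm2, hm2ev⟩ := hb0' x r hr
  obtain ⟨m, hm, hmev⟩ := hcFm m2 hm2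
  refine ⟨m, hm, ?_⟩
  rw [Phi_encode, hcf]
  simp only [← hn0, Nat.unpair_pair]
  have h1 : r ∈ (Phi n0.unpair.2.unpair.1 n0.unpair.2.unpair.2.unpair.1).bind fun c =>
      Phi c n0.unpair.2.unpair.2.unpair.1 := by
    simp only [hn0, Nat.unpair_pair]
    exact Part.mem_bind_iff.2 ⟨c', hc'ev, hrev⟩
  exact Part.mem_bind_iff.2 ⟨r, h1,
    Part.mem_bind_iff.2 ⟨cF, hcFev, Part.mem_bind_iff.2 ⟨m2, hm2ev, hmev⟩⟩⟩
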